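/- If y = f_u(x), then ∏_{i=1}^{n} (u_i + x_i)/x_i = ∏_{i=1}^{n} (u_i + y_i)/u_i. -/

import Mathlib

/- Setting: a semifield `K` (commutative associative addition `add`, multiplicative
abelian group, distributivity), a fixed `u ∈ K^n`, all `n`-tuples extended
`n`-periodically to families indexed by `ℤ`. -/

variable {K : Type*} [CommGroup K]

/-- The nonempty sum `f 0 + f 1 + ⋯ + f r` with respect to the binary operation `add`. -/
def addSum (add : K → K → K) (f : ℕ → K) : ℕ → K
  | 0 => f 0
  | r + 1 => add (addSum add f r) (f (r + 1))

/-- The element `t_{r,j} = Σ_{k=0}^{r} (∏_{i=1}^{k} x_{j+i}) · (∏_{i=k+1}^{r} u_{j+i})`. -/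
def tpoly (add : K → K → K) (u x : ℤ → K) (r : ℕ) (j : ℤ) : K :=
  addSum add
    (fun k => (∏ i ∈ Finset.Icc 1 k, x (j + i)) * ∏ i ∈ Finset.Icc (k + 1) r, u (j + i)) r

open Fin.IntCast in
/-- The `n`-periodic extension of an `n`-tuple to a family indexed by `ℤ`. -/
def extend {n : ℕ} [NeZero n] (v : Fin n → K) : ℤ → K := fun i => v (i : Fin n)

/-- The map `f_u : K^n → K^n`, sending `x` to the `n`-tuple `y` with
`y_i = u_i · (u_{i-1} t_{n-1,i-1}) / (x_{i+1} t_{n-1,i+1})`. -/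
def fu {n : ℕ} [NeZero n] (add : K → K → K) (u : Fin n → K) (x : Fin n → K) : Fin n → K :=
  fun i =>
    u i * (extend u ((i : ℤ) - 1) * tpoly add (extend u) (extend x) (n - 1) ((i : ℤ) - 1)) /
      (extend x ((i : ℤ) + 1) * tpoly add (extend u) (extend x) (n - 1) ((i : ℤ) + 1))

/-! Write `t_j = t_{n-1,j}` and let `a_k` (resp. `b_k`) be the product over the `n` consecutive
positions starting at `j` (resp. `j + 1`) taking `x` at the first `k` of them and `u` at the rest.
By periodicity `u_{j-1} t_{j-1} = Σ_{k<n} a_k`, `x_j t_j = Σ_{0<k≤n} a_k`, `u_j t_j = Σ_{k<n} b_k`,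
`x_{j+1} t_{j+1} = Σ_{0<k≤n} b_k`, while `a_0 = b_0` and `a_n = b_n` are products over a full
period; hence `u_{j-1} t_{j-1} + x_{j+1} t_{j+1} = (u_j + x_j) t_j`. This gives
`(u_i + y_i) / u_i = (u_i + x_i) / x_i · g_i / g_{i+1}` with `g = x t` periodic, and the product
telescopes. -/

open Finset
open Function (Periodic)

section AddSum

variable (add : K → K → K)

omit [CommGroup K] in
lemma addSum_congr {f g : ℕ → K} : ∀ {r : ℕ}, (∀ k ≤ r, f k = g k) →
    addSum add f r = addSum add g r
  | 0, h => h 0 le_rfl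
  | r + 1, h => by
    rw [addSum, addSum, addSum_congr fun k hk => h k (hk.trans r.le_succ), h (r + 1) le_rfl]

lemma mul_addSum (hdistrib : ∀ a b c : K, a * add b c = add (a * b) (a * c))
    (c : K) (f : ℕ → K) : ∀ r, c * addSum add f r = addSum add (fun k => c * f k) r
  | 0 => rfl
  | r + 1 => by rw [addSum, addSum, hdistrib, mul_addSum hdistrib c f r]

omit [CommGroup K] in
lemma addSum_succ' (hassoc : ∀ a b c : K, add (add a b) c = add a (add b c))
    (f : ℕ → K) : ∀ r, addSum add f (r + 1) = add (f 0) (addSum add (fun k => f (k + 1)) r)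
  | 0 => rfl
  | r + 1 => by rw [addSum, addSum_succ' hassoc f r, hassoc, addSum]

omit [CommGroup K] in
lemma addSum_add_addSum_succ_comm (hassoc : ∀ a b c : K, add (add a b) c = add a (add b c))
    (hcomm : ∀ a b : K, add a b = add b a) {f g : ℕ → K} (r : ℕ)
    (h0 : f 0 = g 0) (hr : f (r + 1) = g (r + 1)) :
    add (addSum add f r) (addSum add (fun k => g (k + 1)) r)
      = add (addSum add g r) (addSum add (fun k => f (k + 1)) r) := by
  cases r with
  | zero => simp only [addSum, h0, hr]
  | succ r =>
    rw [addSum_succ' add hassoc f, addSum_succ' add hassoc g, addSum, addSum, h0, hr]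
    simp only [hassoc]
    rw [← hassoc (addSum add _ r), ← hassoc (addSum add _ r),
      hcomm (addSum add (fun k => f (k + 1)) r)]

end AddSum

lemma Function.Periodic.prod_range_add_one {f : ℤ → K} {n : ℕ} (hf : Periodic f n)
    (j : ℤ) : ∏ i ∈ range n, f (j + 1 + i) = ∏ i ∈ range n, f (j + i) := by
  cases n with
  | zero => simp
  | succ m =>
    rw [prod_range_succ, prod_range_succ', Nat.cast_zero, add_zero, ← hf j]
    push_cast
    simp only [add_assoc, add_comm (1 : ℤ)]

lemma Function.Periodic.prod_fin_div_add_one {f : ℤ → K} {n : ℕ} (hf : Periodic f n) :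
    ∏ i : Fin n, f i / f (i + 1) = 1 := by
  rw [prod_div_distrib, div_eq_one, Fin.prod_univ_eq_prod_range (fun i => f i),
    Fin.prod_univ_eq_prod_range (fun i => f (i + 1))]
  simpa [add_comm] using (hf.prod_range_add_one 0).symm

section MixedProd

variable (u x : ℤ → K)

def mixedProd (j : ℤ) (k m : ℕ) : K :=
  ∏ i ∈ range m, if i < k then x (j + i) else u (j + i)

lemma mixedProd_zero (j : ℤ) (m : ℕ) : mixedProd u x j 0 m = ∏ i ∈ range m, u (j + i) := by
  simp [mixedProd]

lemma mixedProd_self (j : ℤ) (m : ℕ) : mixedProd u x j m m = ∏ i ∈ range m, x (j + i) :=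
  prod_congr rfl fun _ hi => if_pos (mem_range.1 hi)

lemma mul_mixedProd_add_one (j : ℤ) (k m : ℕ) :
    x j * mixedProd u x (j + 1) k m = mixedProd u x j (k + 1) (m + 1) := by
  simp only [mixedProd, prod_range_succ', add_lt_add_iff_right, Nat.cast_add, Nat.cast_one,
    Nat.cast_zero, add_zero, Nat.zero_lt_succ, if_true, add_assoc, add_comm (1 : ℤ), mul_comm]

lemma mixedProd_mul {k m : ℕ} (h : k ≤ m) (j : ℤ) :
    mixedProd u x j k m * u (j + m) = mixedProd u x j k (m + 1) := by
  rw [mixedProd, mixedProd, prod_range_succ, if_neg h.not_gt]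

lemma prod_Icc_mul_prod_Icc_eq_mixedProd {k r : ℕ} (h : k ≤ r) (j : ℤ) :
    (∏ i ∈ Icc 1 k, x (j + i)) * ∏ i ∈ Icc (k + 1) r, u (j + i) = mixedProd u x (j + 1) k r := by
  rw [mixedProd, ← prod_range_mul_prod_Ico _ h, ← Ico_add_one_right_eq_Icc,
    ← Ico_add_one_right_eq_Icc, prod_Ico_eq_prod_range, prod_Ico_eq_prod_range,
    prod_Ico_eq_prod_range, Nat.add_sub_add_right, Nat.add_sub_cancel]
  congr 1 <;> refine prod_congr rfl fun i hi => ?_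
  · simp [mem_range.1 hi, add_assoc, add_comm (1 : ℤ)]
  · simp [add_assoc, add_comm (1 : ℤ)]

lemma tpoly_eq_addSum_mixedProd (add : K → K → K) (r : ℕ) (j : ℤ) :
    tpoly add u x r j = addSum add (fun k => mixedProd u x (j + 1) k r) r :=
  addSum_congr add fun _ hk => prod_Icc_mul_prod_Icc_eq_mixedProd u x hk j

variable {u x} {c : ℤ}

lemma Function.Periodic.mixedProd (hu : Periodic u c) (hx : Periodic x c)
    (k m : ℕ) : Periodic (fun j => mixedProd u x j k m) c := fun j => by
  simp only [_root_.mixedProd, add_right_comm j c, hu _, hx _]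

lemma Function.Periodic.tpoly (add : K → K → K) (hu : Periodic u c)
    (hx : Periodic x c) (r : ℕ) : Periodic (tpoly add u x r) c := fun j => by
  simp only [tpoly_eq_addSum_mixedProd, add_right_comm j c, (hu.mixedProd hx _ _) _]

end MixedProd

theorem add_mul_tpoly_pred_mul_tpoly_succ {n : ℕ} [NeZero n] (add : K → K → K)
    (hassoc : ∀ a b c : K, add (add a b) c = add a (add b c))
    (hcomm : ∀ a b : K, add a b = add b a)
    (hdistrib : ∀ a b c : K, a * add b c = add (a * b) (a * c))
    {u x : ℤ → K} (hu : Periodic u n) (hx : Periodic x n) (j : ℤ) :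
    add (u (j - 1) * tpoly add u x (n - 1) (j - 1)) (x (j + 1) * tpoly add u x (n - 1) (j + 1))
      = add (u j * tpoly add u x (n - 1) j) (x j * tpoly add u x (n - 1) j) := by
  obtain ⟨m, rfl⟩ := Nat.exists_eq_add_one_of_ne_zero (NeZero.ne n)
  simp only [Nat.add_sub_cancel, tpoly_eq_addSum_mixedProd, mul_addSum add hdistrib]
  have hu_pred : addSum add (fun k => u (j - 1) * mixedProd u x (j - 1 + 1) k m) m
      = addSum add (fun k => mixedProd u x j k (m + 1)) m := addSum_congr add fun k hk => by
    rw [sub_add_cancel, ← hu (j - 1), mul_comm, ← mixedProd_mul u x hk]; push_cast; ring_nf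
  have hu_self : addSum add (fun k => u j * mixedProd u x (j + 1) k m) m
      = addSum add (fun k => mixedProd u x (j + 1) k (m + 1)) m := addSum_congr add fun k hk => by
    rw [← hu j, mul_comm, ← mixedProd_mul u x hk]; push_cast; ring_nf
  have hx_succ : addSum add (fun k => x (j + 1) * mixedProd u x (j + 1 + 1) k m) m
      = addSum add (fun k => mixedProd u x (j + 1) (k + 1) (m + 1)) m :=
    addSum_congr add fun k _ => mul_mixedProd_add_one u x (j + 1) k m
  have hx_self : addSum add (fun k => x j * mixedProd u x (j + 1) k m) m
      = addSum add (fun k => mixedProd u x j (k + 1) (m + 1)) m :=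
    addSum_congr add fun k _ => mul_mixedProd_add_one u x j k m
  rw [hu_pred, hu_self, hx_succ, hx_self]
  refine addSum_add_addSum_succ_comm add hassoc hcomm (f := fun k => mixedProd u x j k (m + 1))
    (g := fun k => mixedProd u x (j + 1) k (m + 1)) m ?_ ?_
  · rw [mixedProd_zero, mixedProd_zero, hu.prod_range_add_one]
  · rw [mixedProd_self, mixedProd_self, hx.prod_range_add_one]

section Extend

variable {n : ℕ} [NeZero n]

omit [CommGroup K] in
lemma extend_periodic (v : Fin n → K) : Periodic (extend v) n := fun _ =>
  congrArg v (Fin.ext (by simp))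

omit [CommGroup K] in
lemma extend_natCast (v : Fin n → K) (i : Fin n) : extend v i = v i :=
  congrArg v (Fin.ext (by simp [Int.emod_eq_of_lt]))

end Extend

lemma add_mul_div_div_eq_of_add_eq (add : K → K → K) (hcomm : ∀ a b : K, add a b = add b a)
    (hdistrib : ∀ a b c : K, a * add b c = add (a * b) (a * c)) {u x α β t : K}
    (h : add α β = t * add u x) :
    add u (u * α / β) / u = add u x / x * (x * t / β) := by
  have hfactor : add u (u * α / β) = u / β * add α β := by
    rw [hdistrib, div_mul_cancel, hcomm, mul_div_right_comm]
  rw [hfactor, h]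
  apply Additive.ofMul.injective
  simp only [ofMul_div, ofMul_mul]
  abel

lemma add_fu_div_eq {n : ℕ} [NeZero n] (add : K → K → K)
    (hassoc : ∀ a b c : K, add (add a b) c = add a (add b c))
    (hcomm : ∀ a b : K, add a b = add b a)
    (hdistrib : ∀ a b c : K, a * add b c = add (a * b) (a * c)) (u x : Fin n → K) (i : Fin n) :
    add (u i) (fu add u x i) / u i = add (u i) (x i) / x i *
      ((extend x * tpoly add (extend u) (extend x) (n - 1)) i /
        (extend x * tpoly add (extend u) (extend x) (n - 1)) (i + 1)) := by
  have hkey := add_mul_tpoly_pred_mul_tpoly_succ add hassoc hcomm hdistrib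
    (extend_periodic u) (extend_periodic x) i
  rw [extend_natCast, extend_natCast, mul_comm (u i), mul_comm (x i), ← hdistrib] at hkey
  rw [Pi.mul_apply, Pi.mul_apply, extend_natCast]
  exact add_mul_div_div_eq_of_add_eq add hcomm hdistrib hkey

/-- Theorem: if `y = f_u(x)`, then `∏_{i=1}^n (u_i + x_i)/x_i = ∏_{i=1}^n (u_i + y_i)/u_i`. -/
theorem fu_global_invariant (n : ℕ) [NeZero n] (add : K → K → K)
    (hadd_assoc : ∀ a b c : K, add (add a b) c = add a (add b c))
    (hadd_comm : ∀ a b : K, add a b = add b a)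
    (hdistrib : ∀ a b c : K, a * add b c = add (a * b) (a * c))
    (u : Fin n → K)
    (x y : Fin n → K) (hy : y = fu add u x) :
    ∏ i, add (u i) (x i) / x i = ∏ i, add (u i) (y i) / u i := by
  subst hy
  have hG := (extend_periodic x).mul ((extend_periodic u).tpoly add (extend_periodic x) (n - 1))
  rw [prod_congr rfl fun i _ => add_fu_div_eq add hadd_assoc hadd_comm hdistrib u x i,
    prod_mul_distrib, hG.prod_fin_div_add_one, mul_one]
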